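/- Let T be a bounded linear operator on a complex Hilbert space H and N an algebra norm on B(H). Then dw_N(T) ≥ (1/2) sqrt( N(|T|² + |T*|²) + 2 N(|T|)⁴ + 2 |N(Re(T))² + N(|T|)⁴ − N(Im(T))²| ). -/

import Mathlib

open ContinuousLinearMap Complex

variable {H : Type*} [NormedAddCommGroup H] [InnerProductSpace ℂ H] [CompleteSpace H]

/-- Real part of an operator: `Re(A) = (A + A*)/2`. -/
noncomputable def reOp (A : H →L[ℂ] H) : H →L[ℂ] H := (2 : ℂ)⁻¹ • (A + adjoint A)

/-- Imaginary part of an operator: `Im(A) = (A - A*)/(2i)`. -/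
noncomputable def imOp (A : H →L[ℂ] H) : H →L[ℂ] H := (2 * I)⁻¹ • (A - adjoint A)

/-- Modulus of an operator: `|A| = (A* A)^{1/2}`. -/
noncomputable def absOp (A : H →L[ℂ] H) : H →L[ℂ] H := CFC.sqrt (adjoint A * A)

/-- Generalized numerical radius. -/
noncomputable def wN (N : (H →L[ℂ] H) → ℝ) (T : H →L[ℂ] H) : ℝ :=
  ⨆ θ : ℝ, N (reOp (Complex.exp (θ * I) • T))

/-- Generalized Davis–Wielandt radius. -/
noncomputable def dwN (N : (H →L[ℂ] H) → ℝ) (T : H →L[ℂ] H) : ℝ :=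
  ⨆ θ : ℝ, Real.sqrt ((N (reOp (Complex.exp (θ * I) • T))) ^ 2
    + (N (reOp (Complex.exp (θ * I) • absOp T))) ^ 4)

/-! Evaluating the supremum defining `dwN N T` at `θ = 0` and `θ = π / 2`, where `Re |T| = |T|`
and `Re (i |T|) = 0`, gives `dwN N T ≥ max √u √v` with `u = N(Re T)² + N(|T|)⁴` and
`v = N(Im T)²`. Conversely, `|T|² + |T*|² = 2 (Re T)² + 2 (Im T)²` and submultiplicativity bound
the right-hand side by `½ √(2u + 2v + 2|u - v|) = max √u √v`. -/

lemma isSelfAdjoint_absOp (T : H →L[ℂ] H) : IsSelfAdjoint (absOp T) :=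
  .of_nonneg (CFC.sqrt_nonneg _)

lemma absOp_sq (T : H →L[ℂ] H) : absOp T ^ 2 = adjoint T * T := by
  refine CFC.sq_sqrt _ ?_
  rw [← star_eq_adjoint]
  exact star_mul_self_nonneg T

lemma reOp_of_isSelfAdjoint {A : H →L[ℂ] H} (hA : IsSelfAdjoint A) : reOp A = A := by
  rw [reOp, ← star_eq_adjoint, hA.star_eq, ← two_smul ℂ, smul_smul]
  norm_num

lemma reOp_I_smul (A : H →L[ℂ] H) : reOp (I • A) = -imOp A := by
  have h : ((2 : ℂ) * I)⁻¹ = -(2 : ℂ)⁻¹ * I := by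
    rw [mul_inv, Complex.inv_I]; ring
  rw [reOp, imOp, h, ← star_eq_adjoint, ← star_eq_adjoint, star_smul]
  simp only [RCLike.star_def, Complex.conj_I, smul_add, smul_sub, smul_smul, neg_smul]
  module

lemma reOp_I_smul_of_isSelfAdjoint {A : H →L[ℂ] H} (hA : IsSelfAdjoint A) :
    reOp (I • A) = 0 := by
  rw [reOp_I_smul, imOp, ← star_eq_adjoint, hA.star_eq, sub_self, smul_zero, neg_zero]

lemma absOp_sq_add_absOp_adjoint_sq (T : H →L[ℂ] H) :
    absOp T ^ 2 + absOp (adjoint T) ^ 2 = (2 : ℂ) • reOp T ^ 2 + (2 : ℂ) • imOp T ^ 2 := by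
  rw [absOp_sq, absOp_sq, adjoint_adjoint, reOp, imOp, smul_pow, smul_pow, inv_pow, inv_pow,
    mul_pow, I_sq]
  simp only [pow_two, mul_add, add_mul, mul_sub, sub_mul, smul_add, smul_sub, smul_smul]
  module

section AlgebraNorm

variable {N : (H →L[ℂ] H) → ℝ}

lemma N_reOp_exp_smul_le (hNadd : ∀ A B : H →L[ℂ] H, N (A + B) ≤ N A + N B)
    (hNsmul : ∀ (c : ℂ) (A : H →L[ℂ] H), N (c • A) = ‖c‖ * N A) (A : H →L[ℂ] H) (θ : ℝ) :
    N (reOp (exp (θ * I) • A)) ≤ (N A + N (adjoint A)) / 2 := by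
  have hA : N (exp (θ * I) • A) = N A := by
    rw [hNsmul, norm_exp_ofReal_mul_I, one_mul]
  have hA' : N (adjoint (exp (θ * I) • A)) = N (adjoint A) := by
    rw [← star_eq_adjoint, star_smul, hNsmul, norm_star, norm_exp_ofReal_mul_I, one_mul,
      star_eq_adjoint]
  rw [reOp, hNsmul, norm_inv, Complex.norm_two]
  linarith [hNadd (exp (θ * I) • A) (adjoint (exp (θ * I) • A))]

lemma le_dwN (hN0 : ∀ A : H →L[ℂ] H, 0 ≤ N A)
    (hNadd : ∀ A B : H →L[ℂ] H, N (A + B) ≤ N A + N B)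
    (hNsmul : ∀ (c : ℂ) (A : H →L[ℂ] H), N (c • A) = ‖c‖ * N A) (T : H →L[ℂ] H) (θ : ℝ) :
    √(N (reOp (exp (θ * I) • T)) ^ 2 + N (reOp (exp (θ * I) • absOp T)) ^ 4) ≤ dwN N T := by
  unfold dwN
  apply le_ciSup (α := ℝ) ?_ θ
  refine ⟨√(((N T + N (adjoint T)) / 2) ^ 2
      + ((N (absOp T) + N (adjoint (absOp T))) / 2) ^ 4), ?_⟩
  rintro _ ⟨φ, rfl⟩
  dsimp only
  gcongr
  · exact hN0 _
  · exact N_reOp_exp_smul_le hNadd hNsmul T φ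
  · exact hN0 _
  · exact N_reOp_exp_smul_le hNadd hNsmul (absOp T) φ

lemma sqrt_N_reOp_sq_add_N_absOp_pow_four_le_dwN (hN0 : ∀ A : H →L[ℂ] H, 0 ≤ N A)
    (hNadd : ∀ A B : H →L[ℂ] H, N (A + B) ≤ N A + N B)
    (hNsmul : ∀ (c : ℂ) (A : H →L[ℂ] H), N (c • A) = ‖c‖ * N A) (T : H →L[ℂ] H) :
    √(N (reOp T) ^ 2 + N (absOp T) ^ 4) ≤ dwN N T := by
  simpa [reOp_of_isSelfAdjoint (isSelfAdjoint_absOp T)] using le_dwN hN0 hNadd hNsmul T 0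

lemma N_imOp_le_dwN (hN0 : ∀ A : H →L[ℂ] H, 0 ≤ N A)
    (hNadd : ∀ A B : H →L[ℂ] H, N (A + B) ≤ N A + N B)
    (hNsmul : ∀ (c : ℂ) (A : H →L[ℂ] H), N (c • A) = ‖c‖ * N A) (T : H →L[ℂ] H) :
    N (imOp T) ≤ dwN N T := by
  have h := le_dwN hN0 hNadd hNsmul T (Real.pi / 2)
  have hneg : N (-imOp T) = N (imOp T) := by simpa using hNsmul (-1) (imOp T)
  have hzero : N 0 = 0 := by simpa using hNsmul 0 0
  rwa [ofReal_div, ofReal_ofNat, exp_pi_div_two_mul_I, reOp_I_smul,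
    reOp_I_smul_of_isSelfAdjoint (isSelfAdjoint_absOp T), hneg, hzero, zero_pow four_ne_zero,
    add_zero, Real.sqrt_sq (hN0 _)] at h

lemma N_absOp_sq_add_absOp_adjoint_sq_le
    (hNadd : ∀ A B : H →L[ℂ] H, N (A + B) ≤ N A + N B)
    (hNsmul : ∀ (c : ℂ) (A : H →L[ℂ] H), N (c • A) = ‖c‖ * N A)
    (hNmul : ∀ A B : H →L[ℂ] H, N (A * B) ≤ N A * N B) (T : H →L[ℂ] H) :
    N (absOp T ^ 2 + absOp (adjoint T) ^ 2) ≤ 2 * N (reOp T) ^ 2 + 2 * N (imOp T) ^ 2 := by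
  have hsq : ∀ A : H →L[ℂ] H, N (A ^ 2) ≤ N A ^ 2 := fun A => by
    simpa only [pow_two] using hNmul A A
  rw [absOp_sq_add_absOp_adjoint_sq]
  refine (hNadd _ _).trans ?_
  rw [hNsmul, hNsmul, Complex.norm_two]
  linarith [hsq (reOp T), hsq (imOp T)]

end AlgebraNorm

lemma half_mul_sqrt_add_add_abs_sub_eq_max (u v : ℝ) :
    1 / 2 * √(2 * u + 2 * v + 2 * |u - v|) = max √u √v := by
  have h : 2 * u + 2 * v + 2 * |u - v| = 2 ^ 2 * max u v := by
    rw [← max_sub_min_eq_abs']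
    linarith [min_add_max u v]
  rw [h, Real.sqrt_mul (by norm_num), Real.sqrt_sq (by norm_num),
    Real.sqrt_monotone.map_max]
  ring

theorem stmt_5_general (N : (H →L[ℂ] H) → ℝ) (T : H →L[ℂ] H)
    (hN0 : ∀ A : H →L[ℂ] H, 0 ≤ N A)
    (hNadd : ∀ A B : H →L[ℂ] H, N (A + B) ≤ N A + N B)
    (hNsmul : ∀ (c : ℂ) (A : H →L[ℂ] H), N (c • A) = ‖c‖ * N A)
    (hNmul : ∀ A B : H →L[ℂ] H, N (A * B) ≤ N A * N B) :
    dwN N T ≥ (1 / 2) * Real.sqrt (N (absOp T ^ 2 + absOp (adjoint T) ^ 2)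
      + 2 * (N (absOp T)) ^ 4
      + 2 * |(N (reOp T)) ^ 2 + (N (absOp T)) ^ 4 - (N (imOp T)) ^ 2|) := by
  set u := N (reOp T) ^ 2 + N (absOp T) ^ 4
  set v := N (imOp T) ^ 2
  calc 1 / 2 * √(N (absOp T ^ 2 + absOp (adjoint T) ^ 2) + 2 * N (absOp T) ^ 4 + 2 * |u - v|)
      ≤ 1 / 2 * √(2 * u + 2 * v + 2 * |u - v|) := by
        gcongr 1 / 2 * √?_
        linarith [N_absOp_sq_add_absOp_adjoint_sq_le hNadd hNsmul hNmul T]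
    _ = max √u (N (imOp T)) := by
        rw [half_mul_sqrt_add_add_abs_sub_eq_max, Real.sqrt_sq (hN0 _)]
    _ ≤ dwN N T := max_le (sqrt_N_reOp_sq_add_N_absOp_pow_four_le_dwN hN0 hNadd hNsmul T)
        (N_imOp_le_dwN hN0 hNadd hNsmul T)

theorem stmt_5 (N : (H →L[ℂ] H) → ℝ) (T : H →L[ℂ] H)
    (hN0 : ∀ A : H →L[ℂ] H, 0 ≤ N A)
    (hNeq : ∀ A : H →L[ℂ] H, N A = 0 → A = 0)
    (hNadd : ∀ A B : H →L[ℂ] H, N (A + B) ≤ N A + N B)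
    (hNsmul : ∀ (c : ℂ) (A : H →L[ℂ] H), N (c • A) = ‖c‖ * N A)
    (hNmul : ∀ A B : H →L[ℂ] H, N (A * B) ≤ N A * N B) :
    dwN N T ≥ (1 / 2) * Real.sqrt (N (absOp T ^ 2 + absOp (adjoint T) ^ 2)
      + 2 * (N (absOp T)) ^ 4
      + 2 * |(N (reOp T)) ^ 2 + (N (absOp T)) ^ 4 - (N (imOp T)) ^ 2|) :=
  stmt_5_general N T hN0 hNadd hNsmul hNmul
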